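/- If x_1 and x_2 are both minimizers of F(x) = (1/2)\|y - Bx\|_2^2 + \lambda \|x\|_1 with \lambda > 0, then B x_1 = B x_2. -/
import Mathlib


/-- The Lasso objective `F(x) = (1/2)‖y - Bx‖₂² + λ‖x‖₁`. -/
noncomputable def lassoObjective {N d : ℕ} (B : Matrix (Fin N) (Fin d) ℝ)
    (y : Fin N → ℝ) (lam : ℝ) (x : Fin d → ℝ) : ℝ :=
  (1 / 2) * ∑ i, (y i - B.mulVec x i) ^ 2 + lam * ∑ j, |x j|

/-- If `x₁` and `x₂` are both minimizers of the Lasso objective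
`F(x) = (1/2)‖y - Bx‖₂² + λ‖x‖₁` with `λ > 0`, then `B x₁ = B x₂`. -/
theorem lasso_minimizers_same_fit {N d : ℕ} (B : Matrix (Fin N) (Fin d) ℝ)
    (y : Fin N → ℝ) (lam : ℝ) (hlam : 0 < lam) (x₁ x₂ : Fin d → ℝ)
    (h₁ : ∀ x : Fin d → ℝ, lassoObjective B y lam x₁ ≤ lassoObjective B y lam x)
    (h₂ : ∀ x : Fin d → ℝ, lassoObjective B y lam x₂ ≤ lassoObjective B y lam x) :
    B.mulVec x₁ = B.mulVec x₂ := by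
  set a := B.mulVec x₁ with ha
  set b := B.mulVec x₂ with hb
  set m : Fin d → ℝ := fun j => (x₁ j + x₂ j) / 2 with hmdef
  have hm : ∀ i, B.mulVec m i = (a i + b i) / 2 := by
    intro i
    simp only [ha, hb, Matrix.mulVec, dotProduct, hmdef]
    rw [← Finset.sum_add_distrib, Finset.sum_div]
    apply Finset.sum_congr rfl
    intros; ring
  have heq : lassoObjective B y lam x₁ = lassoObjective B y lam x₂ :=
    le_antisymm (h₁ x₂) (h₂ x₁)
  -- quadratic identity at the midpoint
  have hquad : ∑ i, (y i - B.mulVec m i) ^ 2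
      = (1/2) * ∑ i, (y i - a i) ^ 2 + (1/2) * ∑ i, (y i - b i) ^ 2
        - ∑ i, ((a i - b i) / 2) ^ 2 := by
    rw [Finset.mul_sum, Finset.mul_sum, ← Finset.sum_add_distrib,
      ← Finset.sum_sub_distrib]
    apply Finset.sum_congr rfl
    intro i _
    rw [hm i]; ring
  have habs : ∑ j, |m j| ≤ (1/2) * ∑ j, |x₁ j| + (1/2) * ∑ j, |x₂ j| := by
    rw [Finset.mul_sum, Finset.mul_sum, ← Finset.sum_add_distrib]
    apply Finset.sum_le_sum
    intro j _
    have := abs_add_le (x₁ j) (x₂ j)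
    simp only [hmdef]
    rw [abs_div]
    simp only [abs_two]
    linarith
  have hmin := h₁ m
  have hsum_le : ∑ i, ((a i - b i) / 2) ^ 2 ≤ 0 := by
    simp only [lassoObjective, ← ha, ← hb] at heq hmin
    rw [hquad] at hmin
    have hmul := mul_le_mul_of_nonneg_left habs hlam.le
    linarith
  have hterm : ∀ i, ((a i - b i) / 2) ^ 2 = 0 := by
    intro i
    have hnn : ∀ i ∈ Finset.univ, (0:ℝ) ≤ ((a i - b i) / 2) ^ 2 :=
      fun i _ => sq_nonneg _
    have := (Finset.sum_eq_zero_iff_of_nonneg hnn).mp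
      (le_antisymm hsum_le (Finset.sum_nonneg hnn))
    exact this i (Finset.mem_univ i)
  funext i
  have := hterm i
  have h2 : (a i - b i) / 2 = 0 := by
    exact pow_eq_zero_iff (n := 2) (by norm_num) |>.mp this
  have : a i = b i := by linarith [h2]
  exact this
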